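/- arXiv:1705.08033 — 2 statements merged into one kernel-verified Lean document; each statement's English description precedes it below -/
import Mathlib

section
/- Consider a society with two communities A and B, each consisting of one man and one woman (agents m^A, w^A, m^B, w^B), with preferences: both men prefer w^A to w^B, and both women prefer m^B to m^A. Then every stable matching scheme σ satisfies σ(w^A, {A}) = m^A, σ(w^B, {B}) = m^B, and σ(w^A, {A,B}) = m^B (hence σ(w^B,{A,B}) = m^A), so that both m^A and w^B strictly prefer the partner they obtain in their own community to the partner they obtain in the integrated society {A,B}. -/
/-!
`m^B` and `w^A` are each other's first choice in the integrated society, so every stable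
matching marries them; stability then forces the two remaining agents `m^A` and `w^B`
together. In each single community the only man and the only woman must be married,
since two single agents of opposite gender would block.
-/

/-- A strict preference profile: each agent `x` has a strict total order over
agents of the opposite gender, and prefers any such partner to being unmatched
(i.e. to "obtaining" him/herself). `pref x a b` means `x` strictly prefers `a` to `b`. -/
structure Prefs (Agent : Type) (man : Agent → Bool) where
  pref : Agent → Agent → Agent → Prop
  irrefl : ∀ x a, ¬ pref x a a
  trans : ∀ x a b c, pref x a b → pref x b c → pref x a c
  total : ∀ x a b, man a ≠ man x → man b ≠ man x → a ≠ b → pref x a b ∨ pref x b a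
  worst : ∀ x a, man a ≠ man x → pref x a x

/-- `x` weakly prefers `a` to `b`. -/
def Prefs.weakPref {Agent : Type} {man : Agent → Bool} (P : Prefs Agent man)
    (x a b : Agent) : Prop := a = b ∨ P.pref x a b

/-- A matching on the set of agents `A`: a function of order two matching
men only to women (or to themselves, meaning unmatched), fixing agents outside `A`. -/
structure IsMatching {Agent : Type} (man : Agent → Bool) (A : Set Agent)
    (μ : Agent → Agent) : Prop where
  mem : ∀ x ∈ A, μ x ∈ A
  invol : ∀ x ∈ A, μ (μ x) = x
  opp : ∀ x ∈ A, μ x ≠ x → man (μ x) ≠ man x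
  fix : ∀ x ∉ A, μ x = x

/-- A matching is stable if there is no blocking pair: a man `m` and a woman `w`,
not married to each other, each strictly preferring the other to their own partner. -/
def IsStable {Agent : Type} {man : Agent → Bool} (P : Prefs Agent man)
    (A : Set Agent) (μ : Agent → Agent) : Prop :=
  IsMatching man A μ ∧
    ¬ ∃ m ∈ A, ∃ w ∈ A, man m ≠ man w ∧ μ m ≠ w ∧
      P.pref m w (μ m) ∧ P.pref w m (μ w)

/-- A matching is Pareto optimal if no matching on the same agents makes every
agent weakly better off and some agent strictly better off. -/
def IsPareto {Agent : Type} {man : Agent → Bool} (P : Prefs Agent man)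
    (A : Set Agent) (μ : Agent → Agent) : Prop :=
  IsMatching man A μ ∧
    ¬ ∃ μ' : Agent → Agent, IsMatching man A μ' ∧
      (∀ x ∈ A, P.weakPref x (μ' x) (μ x)) ∧
      ∃ y ∈ A, P.pref y (μ' y) (μ y)

/-- Genders in the four-agent example: agent 0 is `m^A`, agent 1 is `w^A`,
agent 2 is `m^B`, agent 3 is `w^B`. -/
def man4 : Fin 4 → Bool := fun x => decide (x = 0) || decide (x = 2)

/-- Communities in the four-agent example: agents 0 and 1 form community `A` (0),
agents 2 and 3 form community `B` (1). -/
def comm4 : Fin 4 → Fin 2 := fun x => if x.val < 2 then 0 else 1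

section Stability

variable {Agent : Type} {man : Agent → Bool} {A : Set Agent} {μ : Agent → Agent}

theorem IsMatching.apply_eq_of_apply_eq (hμ : IsMatching man A μ) {x y : Agent} (hx : x ∈ A)
    (hxy : μ x = y) : μ y = x :=
  hxy ▸ hμ.invol x hx

theorem IsMatching.apply_eq_self_or_man_ne (hμ : IsMatching man A μ) {x : Agent} (hx : x ∈ A) :
    μ x = x ∨ man (μ x) ≠ man x :=
  or_iff_not_imp_left.2 (hμ.opp x hx)

theorem IsMatching.apply_ne_of_apply_eq (hμ : IsMatching man A μ) {x y z : Agent}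
    (hx : x ∈ A) (hy : y ∈ A) (hyz : μ y = z) (hxy : x ≠ y) : μ x ≠ z := fun hxz =>
  hxy (by rw [← hμ.invol x hx, ← hμ.invol y hy, hxz, hyz])

variable {P : Prefs Agent man}

theorem IsStable.not_both_single (hμ : IsStable P A μ) {m w : Agent} (hm : m ∈ A) (hw : w ∈ A)
    (hmw : man m ≠ man w) (hmm : μ m = m) (hww : μ w = w) : False := by
  refine hμ.2 ⟨m, hm, w, hw, hmw, ?_, ?_, ?_⟩
  · intro h
    exact hmw (by rw [← h, hmm])
  · rw [hmm]
    exact P.worst m w hmw.symm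
  · rw [hww]
    exact P.worst w m hmw

theorem IsStable.apply_eq_of_apply_mem_pair (hμ : IsStable P A μ) {m w : Agent} (hm : m ∈ A)
    (hw : w ∈ A) (hmw : man m ≠ man w) (hμm : μ m = m ∨ μ m = w)
    (hμw : μ w = w ∨ μ w = m) : μ m = w :=
  hμm.elim (fun hmm => hμw.elim (fun hww => (hμ.not_both_single hm hw hmw hmm hww).elim)
    (hμ.1.apply_eq_of_apply_eq hw)) id

theorem IsStable.apply_eq_of_forall_mem_pair (hμ : IsStable P A μ) {m w : Agent} (hm : m ∈ A)
    (hw : w ∈ A) (hmw : man m ≠ man w) (hA : ∀ x ∈ A, x = m ∨ x = w) : μ m = w :=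
  hμ.apply_eq_of_apply_mem_pair hm hw hmw (hA _ (hμ.1.mem m hm)) (hA _ (hμ.1.mem w hw)).symm

theorem IsStable.pref_apply_of_top (hμ : IsStable P A μ) {x y : Agent} (hx : x ∈ A)
    (hxy : man y ≠ man x) (htop : ∀ z ∈ A, man z ≠ man x → z ≠ y → P.pref x y z)
    (hμx : μ x ≠ y) : P.pref x y (μ x) := by
  rcases hμ.1.apply_eq_self_or_man_ne hx with hself | hopp
  · rw [hself]
    exact P.worst x y hxy
  · exact htop _ (hμ.1.mem x hx) hopp hμx

theorem IsStable.apply_eq_of_mutual_top (hμ : IsStable P A μ) {m w : Agent} (hm : m ∈ A)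
    (hw : w ∈ A) (hmw : man m ≠ man w)
    (htop_m : ∀ z ∈ A, man z ≠ man m → z ≠ w → P.pref m w z)
    (htop_w : ∀ z ∈ A, man z ≠ man w → z ≠ m → P.pref w m z) : μ m = w := by
  by_contra hne
  have hwm : μ w ≠ m := fun h => hne (hμ.1.apply_eq_of_apply_eq hw h)
  exact hμ.2 ⟨m, hm, w, hw, hmw, hne, hμ.pref_apply_of_top hm hmw.symm htop_m hne,
    hμ.pref_apply_of_top hw hmw htop_w hwm⟩

end Stability

theorem comm4_preimage_zero : comm4 ⁻¹' {0} = {0, 1} := by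
  ext x
  fin_cases x <;> simp [comm4]

theorem comm4_preimage_one : comm4 ⁻¹' {1} = {2, 3} := by
  ext x
  fin_cases x <;> simp [comm4]

theorem IsStable.apply_two_eq_one_of_univ {P : Prefs (Fin 4) man4} {μ : Fin 4 → Fin 4}
    (hμ : IsStable P Set.univ μ) (hmB : P.pref 2 1 3) (hwA : P.pref 1 2 0) : μ 2 = 1 := by
  refine hμ.apply_eq_of_mutual_top trivial trivial (by decide) (fun z _ hz hz1 => ?_)
    (fun z _ hz hz2 => ?_)
  · obtain rfl : z = 3 := by revert z; decide
    exact hmB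
  · obtain rfl : z = 0 := by revert z; decide
    exact hwA

theorem IsStable.apply_zero_eq_three_of_univ {P : Prefs (Fin 4) man4} {μ : Fin 4 → Fin 4}
    (hμ : IsStable P Set.univ μ) (h21 : μ 2 = 1) : μ 0 = 3 := by
  have h12 := hμ.1.apply_eq_of_apply_eq trivial h21
  have h0 : μ 0 ≠ 1 := hμ.1.apply_ne_of_apply_eq trivial trivial h21 (by decide)
  have h3 : μ 3 ≠ 2 := hμ.1.apply_ne_of_apply_eq trivial trivial h12 (by decide)
  have h0_cases : ∀ y : Fin 4, (y = 0 ∨ man4 y ≠ man4 0) → y ≠ 1 → y = 0 ∨ y = 3 := by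
    decide
  have h3_cases : ∀ y : Fin 4, (y = 3 ∨ man4 y ≠ man4 3) → y ≠ 2 → y = 3 ∨ y = 0 := by
    decide
  exact hμ.apply_eq_of_apply_mem_pair trivial trivial (by decide)
    (h0_cases _ (hμ.1.apply_eq_self_or_man_ne trivial) h0)
    (h3_cases _ (hμ.1.apply_eq_self_or_man_ne trivial) h3)

/-- **The example of Proposition 1.** With two communities `A = {m^A, w^A}` and
`B = {m^B, w^B}`, both men preferring `w^A` to `w^B` and both women preferring
`m^B` to `m^A`, every stable matching scheme `σ` satisfies
`σ(w^A, {A}) = m^A`, `σ(w^B, {B}) = m^B`, `σ(w^A, {A,B}) = m^B` and hence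
`σ(w^B, {A,B}) = m^A`, so both `m^A` and `w^B` strictly prefer their
own-community partner to the partner obtained in the integrated society. -/
theorem stable_scheme_hurts_mA_and_wB
    (P : Prefs (Fin 4) man4)
    (hmA : P.pref 0 1 3)  -- m^A prefers w^A to w^B
    (hmB : P.pref 2 1 3)  -- m^B prefers w^A to w^B
    (hwA : P.pref 1 2 0)  -- w^A prefers m^B to m^A
    (hwB : P.pref 3 2 0)  -- w^B prefers m^B to m^A
    (σ : Fin 4 → Set (Fin 2) → Fin 4)
    (hσ : ∀ Q : Set (Fin 2), IsStable P {x | comm4 x ∈ Q} (fun x => σ x Q)) :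
    σ 1 {0} = 0 ∧ σ 3 {1} = 2 ∧ σ 1 Set.univ = 2 ∧ σ 3 Set.univ = 0 ∧
      P.pref 0 (σ 0 {comm4 0}) (σ 0 Set.univ) ∧
      P.pref 3 (σ 3 {comm4 3}) (σ 3 Set.univ) := by
  have hA : IsStable P {0, 1} (σ · {0}) := by
    rw [← comm4_preimage_zero]
    exact hσ {0}
  have hB : IsStable P {2, 3} (σ · {1}) := by
    rw [← comm4_preimage_one]
    exact hσ {1}
  have hU : IsStable P Set.univ (σ · Set.univ) := by simpa using hσ Set.univ
  have h01 : σ 0 {0} = 1 := hA.apply_eq_of_forall_mem_pair (by simp) (by simp) (by decide)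
    fun _ hx => hx
  have h32 : σ 3 {1} = 2 := hB.apply_eq_of_forall_mem_pair (by simp) (by simp) (by decide)
    fun _ hx => hx.symm
  have h21 : σ 2 Set.univ = 1 := hU.apply_two_eq_one_of_univ hmB hwA
  have h03 : σ 0 Set.univ = 3 := hU.apply_zero_eq_three_of_univ h21
  have h30 : σ 3 Set.univ = 0 := hU.1.apply_eq_of_apply_eq trivial h03
  refine ⟨hA.1.apply_eq_of_apply_eq (by simp) h01, h32,
    hU.1.apply_eq_of_apply_eq trivial h21, h30, ?_, ?_⟩
  · change P.pref 0 (σ 0 {0}) (σ 0 Set.univ)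
    rw [h01, h03]
    exact hmA
  · change P.pref 3 (σ 3 {1}) (σ 3 Set.univ)
    rw [h32, h30]
    exact hwB
end

section
/- In a society consisting of exactly two communities, integration monotonicity and Pareto optimality are compatible: for every strict preference profile on a society with exactly two communities, there exists a matching scheme that is both Pareto optimal and integration monotonic. (This holds because, for a society with two communities, integration monotonicity and weak integration monotonicity are equivalent.) -/
namespace Prefs

variable {Agent : Type} {man : Agent → Bool} (P : Prefs Agent man)

theorem weakPref_refl (x a : Agent) : P.weakPref x a a := Or.inl rfl

variable {P} {x a b c : Agent}

theorem weakPref_trans (hab : P.weakPref x a b) (hbc : P.weakPref x b c) :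
    P.weakPref x a c := by
  rcases hab with rfl | hab
  · exact hbc
  rcases hbc with rfl | hbc
  · exact Or.inr hab
  · exact Or.inr (P.trans x a b c hab hbc)

theorem pref_of_weakPref_of_pref (hab : P.weakPref x a b) (hbc : P.pref x b c) :
    P.pref x a c := by
  rcases hab with rfl | hab
  · exact hbc
  · exact P.trans x a b c hab hbc

end Prefs

section Pareto

variable {Agent : Type} {man : Agent → Bool} (P : Prefs Agent man) (A : Set Agent)

theorem isMatching_id : IsMatching man A id :=
  ⟨fun _ hx => hx, fun _ _ => rfl, fun _ _ h => absurd rfl h, fun _ _ => rfl⟩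

def ParetoImproves (μ' μ : Agent → Agent) : Prop :=
  (∀ x ∈ A, P.weakPref x (μ' x) (μ x)) ∧ ∃ y ∈ A, P.pref y (μ' y) (μ y)

variable {P A}

theorem ParetoImproves.trans {μ'' μ' μ : Agent → Agent} (h₁ : ParetoImproves P A μ'' μ')
    (h₂ : ParetoImproves P A μ' μ) : ParetoImproves P A μ'' μ := by
  obtain ⟨y, hy, hstrict⟩ := h₂.2
  exact ⟨fun x hx => Prefs.weakPref_trans (h₁.1 x hx) (h₂.1 x hx),
    y, hy, Prefs.pref_of_weakPref_of_pref (h₁.1 y hy) hstrict⟩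

theorem ParetoImproves.irrefl (μ : Agent → Agent) : ¬ ParetoImproves P A μ μ :=
  fun ⟨_, y, _, h⟩ => P.irrefl y _ h

variable (P A)

theorem wellFounded_paretoImproves [Finite Agent] : WellFounded (ParetoImproves P A) :=
  haveI : IsTrans _ (ParetoImproves P A) := ⟨fun _ _ _ => ParetoImproves.trans⟩
  haveI : Std.Irrefl (ParetoImproves P A) := ⟨ParetoImproves.irrefl⟩
  Finite.wellFounded_of_trans_of_irrefl _

theorem exists_isPareto_weakPref [Finite Agent] {μ : Agent → Agent} (hμ : IsMatching man A μ) :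
    ∃ ν, IsPareto P A ν ∧ ∀ x ∈ A, P.weakPref x (ν x) (μ x) := by
  induction μ using (wellFounded_paretoImproves P A).induction with
  | _ μ ih =>
  by_cases hpar : IsPareto P A μ
  · exact ⟨μ, hpar, fun x _ => P.weakPref_refl x _⟩
  obtain ⟨μ', hμ', himp⟩ : ∃ μ', IsMatching man A μ' ∧ ParetoImproves P A μ' μ :=
    not_not.mp fun h => hpar ⟨hμ, h⟩
  obtain ⟨ν, hν, hνμ'⟩ := ih μ' himp hμ'
  exact ⟨ν, hν, fun x hx => Prefs.weakPref_trans (hνμ' x hx) (himp.1 x hx)⟩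

theorem exists_isPareto [Finite Agent] : ∃ ν, IsPareto P A ν :=
  (exists_isPareto_weakPref P A (isMatching_id A)).imp fun _ h => h.1

end Pareto

section Communities

variable {Agent ι : Type} {man : Agent → Bool}

theorem IsMatching.glue {comm : Agent → ι} {μ : ι → Agent → Agent}
    (hμ : ∀ i, IsMatching man {x | comm x = i} (μ i)) (Q : Set ι) [DecidablePred (· ∈ Q)] :
    IsMatching man {x | comm x ∈ Q} (fun x => if comm x ∈ Q then μ (comm x) x else x) := by
  have comm_eq (x : Agent) : comm (μ (comm x) x) = comm x := (hμ (comm x)).mem x rfl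
  constructor
  · intro x (hx : comm x ∈ Q)
    simpa only [if_pos hx, Set.mem_ofPred_eq, comm_eq] using hx
  · intro x (hx : comm x ∈ Q)
    simp only [if_pos hx, comm_eq]
    exact (hμ (comm x)).invol x rfl
  · intro x (hx : comm x ∈ Q)
    simpa only [if_pos hx] using (hμ (comm x)).opp x rfl
  · intro x (hx : comm x ∉ Q)
    simp only [if_neg hx]

theorem Set.eq_empty_of_disjoint_of_not_subsingleton [Fintype ι] (hι : Fintype.card ι ≤ 2)
    {Q Q' : Set ι} (hQ : ¬ Q.Subsingleton) (hQQ' : Disjoint Q Q') : Q' = ∅ := by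
  obtain ⟨a, ha, b, hb, hab⟩ := Set.not_subsingleton_iff.mp hQ
  refine Set.eq_empty_of_forall_notMem fun c hc => ?_
  have : 2 < Fintype.card ι :=
    Fintype.two_lt_card_iff.mpr ⟨a, b, c, hab, hQQ'.ne_of_mem ha hc, hQQ'.ne_of_mem hb hc⟩
  omega

theorem integrationMonotonic_of_card_le_two [Fintype ι] (P : Prefs Agent man) (comm : Agent → ι)
    (hι : Fintype.card ι ≤ 2) (σ : Agent → Set ι → Agent)
    (hσ : ∀ Q x, comm x ∈ Q → P.weakPref x (σ x Q) (σ x {comm x}))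
    (Q Q' : Set ι) (hQQ' : Disjoint Q Q') (x : Agent) (hx : comm x ∈ Q) :
    P.weakPref x (σ x (Q ∪ Q')) (σ x Q) := by
  by_cases hQ : Q.Subsingleton
  · rw [hQ.eq_singleton_of_mem hx]
    exact hσ _ x (Set.mem_union_left _ rfl)
  · rw [Set.eq_empty_of_disjoint_of_not_subsingleton hι hQ hQQ', Set.union_empty]
    exact P.weakPref_refl x _

end Communities

theorem two_communities_pareto_and_IM_compatible_general
    {Agent ι : Type} [Fintype Agent] [Fintype ι]
    (man : Agent → Bool) (comm : Agent → ι)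
    (hκ : Fintype.card ι = 2)
    (P : Prefs Agent man) :
    ∃ σ : Agent → Set ι → Agent,
      (∀ Q : Set ι, IsPareto P {x | comm x ∈ Q} (fun x => σ x Q)) ∧
      (∀ Q Q' : Set ι, Disjoint Q Q' → ∀ x : Agent, comm x ∈ Q →
          P.weakPref x (σ x (Q ∪ Q')) (σ x Q)) := by
  classical
  choose μ₀ hμ₀ using fun Q : Set ι => exists_isPareto P {x | comm x ∈ Q}
  choose μ₁ hμ₁ using fun Q : Set ι =>
    exists_isPareto_weakPref P _ (IsMatching.glue (fun i => (hμ₀ {i}).1) Q)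
  let σ x Q := if Q.Subsingleton then μ₀ Q x else μ₁ Q x
  refine ⟨σ, fun Q => ?_,
    integrationMonotonic_of_card_le_two P comm hκ.le σ fun Q x hx => ?_⟩
  · by_cases hQ : Q.Subsingleton
    · simpa only [σ, if_pos hQ] using hμ₀ Q
    · simpa only [σ, if_neg hQ] using (hμ₁ Q).1
  · by_cases hQ : Q.Subsingleton
    · rw [hQ.eq_singleton_of_mem hx]
      exact P.weakPref_refl x _
    · simpa only [σ, if_neg hQ, Set.subsingleton_singleton, if_pos hx, if_true]
        using (hμ₁ Q).2 x hx

/-- **With exactly two communities, IM and Pareto optimality are compatible.**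
For every society consisting of exactly two pairwise disjoint communities (each
with at least one man and one woman) and every strict preference profile, there
exists a matching scheme that is Pareto optimal for every population and
integration monotonic. -/
theorem two_communities_pareto_and_IM_compatible
    {Agent ι : Type} [Fintype Agent] [Fintype ι]
    (man : Agent → Bool) (comm : Agent → ι)
    (hasMan : ∀ i : ι, ∃ x, comm x = i ∧ man x = true)
    (hasWoman : ∀ i : ι, ∃ x, comm x = i ∧ man x = false)
    (hκ : Fintype.card ι = 2)
    (P : Prefs Agent man) :
    ∃ σ : Agent → Set ι → Agent,
      (∀ Q : Set ι, IsPareto P {x | comm x ∈ Q} (fun x => σ x Q)) ∧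
      (∀ Q Q' : Set ι, Disjoint Q Q' → ∀ x : Agent, comm x ∈ Q →
          P.weakPref x (σ x (Q ∪ Q')) (σ x Q)) :=
  two_communities_pareto_and_IM_compatible_general man comm hκ P
end
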